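/- arXiv:2207.01392 — 4 statements merged into one kernel-verified Lean document; each statement's English description precedes it below -/
import Mathlib

section
/- If f(y) = (4/3)·((1 + sqrt(y))^(3/2) − 1) + 2·sqrt(y) and y = f⁻¹ denotes its inverse function on [0,∞), then y is differentiable on (0,∞) and satisfies y'(s) + 1 = sqrt(1 + sqrt(y(s))) for all s > 0, with y(0) = 0. -/
noncomputable def f (y : ℝ) : ℝ :=
  4 / 3 * ((1 + Real.sqrt y) ^ ((3 : ℝ) / 2) - 1) + 2 * Real.sqrt y

/-! With u = √(1 + √t), differentiating f gives f'(t) = (u + 1)/√t = (u + 1)/(u² - 1) = 1/(u - 1)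
for t > 0. The inverse y is strictly increasing and maps [0,∞) onto [0,∞), hence continuous, so the
inverse function rule gives y'(s) = 1/f'(y s) = √(1 + √(y s)) - 1. -/

open Set Filter Topology

theorem Set.LeftInvOn.strictMonoOn {α β : Type*} [Preorder α] [LinearOrder β] {g : β → α}
    {y : α → β} {s : Set α} {t : Set β} (hinv : LeftInvOn g y s) (hy : MapsTo y s t)
    (hg : MonotoneOn g t) : StrictMonoOn y s := by
  intro a ha b hb hab
  by_contra! hba
  have := hg (hy hb) (hy ha) hba
  rw [hinv ha, hinv hb] at this
  exact hab.not_ge this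

lemma one_lt_sqrt_one_add_sqrt {t : ℝ} (ht : 0 < t) : 1 < √(1 + √t) := by
  rw [Real.lt_sqrt zero_le_one]
  have := Real.sqrt_pos.mpr ht
  linarith

lemma f_zero : f 0 = 0 := by
  simp [f]

lemma f_strictMonoOn : StrictMonoOn f (Ici 0) := by
  intro a ha b _ hab
  have hsqrt : √a < √b := Real.sqrt_lt_sqrt ha hab
  have hpow : (1 + √a) ^ ((3 : ℝ) / 2) < (1 + √b) ^ ((3 : ℝ) / 2) :=
    Real.rpow_lt_rpow (by positivity) (by linarith) (by norm_num)
  unfold f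
  linarith

lemma f_mapsTo_Ici : MapsTo f (Ici 0) (Ici 0) := fun _ ht =>
  f_zero ▸ f_strictMonoOn.monotoneOn self_mem_Ici ht ht

lemma f_hasDerivAt {t : ℝ} (ht : 0 < t) : HasDerivAt f (√(1 + √t) - 1)⁻¹ t := by
  have hsqrt : HasDerivAt Real.sqrt (1 / (2 * √t)) t := Real.hasDerivAt_sqrt ht.ne'
  have hpow := ((hsqrt.const_add 1).rpow_const (p := (3 : ℝ) / 2) (Or.inl (by positivity)))
  refine (((hpow.sub_const 1).const_mul (4 / 3)).add (hsqrt.const_mul 2)).congr_deriv ?_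
  have hst : 0 < √t := Real.sqrt_pos.mpr ht
  have hu : 0 < √(1 + √t) - 1 := sub_pos.mpr (one_lt_sqrt_one_add_sqrt ht)
  have hu_sq : √(1 + √t) ^ 2 = 1 + √t := Real.sq_sqrt (by positivity)
  rw [show (3 : ℝ) / 2 - 1 = 1 / 2 by norm_num, ← Real.sqrt_eq_rpow]
  field_simp
  nlinarith

/-- the inverse y = f⁻¹ of f on [0,∞) is differentiable on (0,∞),
satisfies y'(s) + 1 = √(1 + √(y s)) for all s > 0, and y 0 = 0. -/
theorem inverse_solves_ODE (y : ℝ → ℝ)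
    (hy_nonneg : ∀ s ∈ Set.Ici (0 : ℝ), y s ∈ Set.Ici (0 : ℝ))
    (h_left : ∀ t ∈ Set.Ici (0 : ℝ), y (f t) = t)
    (h_right : ∀ s ∈ Set.Ici (0 : ℝ), f (y s) = s) :
    y 0 = 0 ∧
    ∀ s : ℝ, 0 < s →
      HasDerivAt y (Real.sqrt (1 + Real.sqrt (y s)) - 1) s := by
  have hy0 : y 0 = 0 := by simpa only [f_zero] using h_left 0 self_mem_Ici
  have hmono : StrictMonoOn y (Ici 0) :=
    LeftInvOn.strictMonoOn h_right hy_nonneg f_strictMonoOn.monotoneOn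
  refine ⟨hy0, fun s hs => ?_⟩
  have hys : 0 < y s := hy0 ▸ hmono self_mem_Ici hs.le hs
  have hcont : ContinuousAt y s :=
    hmono.continuousAt_of_image_mem_nhds (Ici_mem_nhds hs)
      (mem_of_superset (Ici_mem_nhds hys) (LeftInvOn.surjOn h_left f_mapsTo_Ici))
  have hderiv_ne : (√(1 + √(y s)) - 1)⁻¹ ≠ 0 :=
    inv_ne_zero (sub_ne_zero.mpr (one_lt_sqrt_one_add_sqrt hys).ne')
  have hinv : ∀ᶠ x in 𝓝 s, f (y x) = x :=
    (eventually_ge_nhds hs).mono fun x hx => h_right x hx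
  simpa using (f_hasDerivAt hys).of_local_left_inverse hcont hderiv_ne hinv
end

section
/- The curves γ_u are C^{1,1}: in particular, at s = u the left and right derivatives of γ_u agree and equal (1,1), and the derivative is Lipschitz near s = u. -/
/-!
Write `f = F ∘ √` with `F x = 4/3 ((1 + x)^(3/2) - 1) + 2x`. Since `F' x = 2√(1 + x) + 2 ≥ 4` on
`[0, ∞)`, the map `φ = √ ∘ finv` is `1/4`-Lipschitz with `φ 0 = 0`, so `finv t = φ(t)² ≤ t²/16`
is `o(t)` as `t → 0⁺`; this gives both one-sided derivatives `(1, 1)` at `u`. For `t > 0` the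
inverse function theorem gives `finv' t = 2 φ(t) / F'(φ t) = √(1 + φ t) - 1`, hence
`γ_u'(s) = (√(1 + φ (max (s - u) 0)), 1)` for every `s`, and this is `1/8`-Lipschitz as the
composition of the `1/2`-Lipschitz map `x ↦ √(1 + x)` on `[0, ∞)` with `φ`.
-/

open Set Filter Topology Asymptotics

noncomputable def F (x : ℝ) : ℝ := 4 / 3 * ((1 + x) ^ ((3 : ℝ) / 2) - 1) + 2 * x

lemma f_eq_F_sqrt (y : ℝ) : f y = F √y := rfl

lemma F_zero : F 0 = 0 := by simp [F]

lemma hasDerivAt_F (x : ℝ) : HasDerivAt F (2 * √(1 + x) + 2) x := by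
  have hpow : HasDerivAt (fun x : ℝ => (1 + x) ^ ((3 : ℝ) / 2)) (3 / 2 * √(1 + x)) x := by
    convert ((hasDerivAt_id' x).const_add 1).rpow_const (p := 3 / 2) (Or.inr (by norm_num)) using 1
    rw [Real.sqrt_eq_rpow]; norm_num
  exact (((hpow.sub_const 1).const_mul (4 / 3)).add ((hasDerivAt_id' x).const_mul 2)).congr_deriv
    (by ring)

lemma four_mul_sub_le_F_sub {a b : ℝ} (ha : 0 ≤ a) (hab : a ≤ b) : 4 * (b - a) ≤ F b - F a := by
  refine (convex_Ici 0).mul_sub_le_image_sub_of_le_deriv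
    (fun x _ => (hasDerivAt_F x).continuousAt.continuousWithinAt)
    (fun x _ => (hasDerivAt_F x).differentiableAt.differentiableWithinAt)
    (fun x hx => ?_) a ha b (ha.trans hab) hab
  rw [interior_Ici, mem_Ioi] at hx
  have : 1 ≤ √(1 + x) := Real.one_le_sqrt.2 (by linarith)
  rw [(hasDerivAt_F x).deriv]
  linarith

lemma four_mul_abs_sub_le_abs_F_sub {a b : ℝ} (ha : 0 ≤ a) (hb : 0 ≤ b) :
    4 * |b - a| ≤ |F b - F a| := by
  rcases le_total a b with hab | hba
  · have := four_mul_sub_le_F_sub ha hab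
    rwa [abs_of_nonneg (sub_nonneg.2 hab), abs_of_nonneg (by linarith)]
  · have := four_mul_sub_le_F_sub hb hba
    rwa [abs_sub_comm, abs_of_nonneg (sub_nonneg.2 hba), abs_sub_comm, abs_of_nonneg (by linarith)]

lemma abs_sqrt_one_add_sub_le {x y : ℝ} (hx : 0 ≤ x) (hy : 0 ≤ y) :
    |√(1 + x) - √(1 + y)| ≤ 1 / 2 * |x - y| := by
  have hpx : 1 ≤ √(1 + x) := Real.one_le_sqrt.2 (by linarith)
  have hpy : 1 ≤ √(1 + y) := Real.one_le_sqrt.2 (by linarith)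
  have hsq : (√(1 + x) - √(1 + y)) * (√(1 + x) + √(1 + y)) = x - y := by
    rw [mul_comm, ← sq_sub_sq, Real.sq_sqrt (by linarith), Real.sq_sqrt (by linarith)]; ring
  rw [← hsq, abs_mul, abs_of_pos (by positivity : 0 < √(1 + x) + √(1 + y))]
  nlinarith [abs_nonneg (√(1 + x) - √(1 + y))]

lemma lipschitzOnWith_sqrt_one_add : LipschitzOnWith (1 / 2) (fun x => √(1 + x)) (Ici 0) :=
  LipschitzOnWith.of_dist_le_mul fun x hx y hy => by
    simpa [Real.dist_eq] using abs_sqrt_one_add_sub_le hx hy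

noncomputable def gamma (g : ℝ → ℝ) (u s : ℝ) : ℝ × ℝ := (if s ≤ u then s else s + g (s - u), s)

section Gamma

variable {g : ℝ → ℝ} {u s : ℝ}

lemma gamma_of_le (hs : s ≤ u) : gamma g u s = (s, s) := by simp [gamma, hs]

lemma gamma_of_gt (hs : u < s) : gamma g u s = (s + g (s - u), s) := by simp [gamma, hs.not_ge]

variable (g u) in
lemma hasDerivWithinAt_gamma_Iic : HasDerivWithinAt (gamma g u) (1, 1) (Iic u) u :=
  ((hasDerivWithinAt_id u _).prodMk (hasDerivWithinAt_id u _)).congr (fun _ hs => gamma_of_le hs)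
    (gamma_of_le le_rfl)

lemma hasDerivWithinAt_gamma_Ici (hg : g =o[𝓝[>] 0] id) :
    HasDerivWithinAt (gamma g u) (1, 1) (Ici u) u := by
  rw [← hasDerivWithinAt_Ioi_iff_Ici]
  refine HasDerivWithinAt.prodMk ?_ (hasDerivWithinAt_id u _)
  rw [hasDerivWithinAt_iff_isLittleO]
  have hshift : Tendsto (· - u) (𝓝[>] u) (𝓝[>] 0) := by
    simpa using (continuous_sub_right u).continuousWithinAt.tendsto_nhdsWithin
      (x := u) (s := Ioi u) (t := Ioi 0) fun _ hs => sub_pos.2 hs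
  refine (hg.comp_tendsto hshift).congr' ?_ EventuallyEq.rfl
  filter_upwards [self_mem_nhdsWithin] with s (hs : u < s)
  simp [hs.not_ge]

lemma hasDerivAt_gamma_of_le (hg : g =o[𝓝[>] 0] id) (hs : s ≤ u) :
    HasDerivAt (gamma g u) (1, 1) s := by
  rcases hs.lt_or_eq with hs | rfl
  · exact ((hasDerivAt_id s).prodMk (hasDerivAt_id s)).congr_of_eventuallyEq
      ((eventually_lt_nhds hs).mono fun _ h => gamma_of_le h.le)
  · have := (hasDerivWithinAt_gamma_Iic g s).union (hasDerivWithinAt_gamma_Ici hg)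
    rwa [Iic_union_Ici, hasDerivWithinAt_univ] at this

lemma hasDerivAt_gamma_of_gt {g' : ℝ} (hs : u < s) (hg : HasDerivAt g g' (s - u)) :
    HasDerivAt (gamma g u) (1 + g', 1) s :=
  (((hasDerivAt_id s).add (hg.comp_sub_const s u)).prodMk (hasDerivAt_id s)).congr_of_eventuallyEq
    ((eventually_gt_nhds hs).mono fun _ h => gamma_of_gt h)

end Gamma

section RightInverse

variable {finv : ℝ → ℝ}

lemma F_sqrt_finv (h : RightInvOn finv f (Ici 0)) {t : ℝ} (ht : 0 ≤ t) : F √(finv t) = t := by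
  rw [← f_eq_F_sqrt]
  exact h ht

lemma sqrt_finv_le (h : RightInvOn finv f (Ici 0)) {t : ℝ} (ht : 0 ≤ t) : √(finv t) ≤ t / 4 := by
  have := four_mul_sub_le_F_sub le_rfl (Real.sqrt_nonneg (finv t))
  rw [F_sqrt_finv h ht, F_zero] at this
  linarith

lemma lipschitzOnWith_sqrt_finv (h : RightInvOn finv f (Ici 0)) :
    LipschitzOnWith (1 / 4) (fun t => √(finv t)) (Ici 0) := by
  refine LipschitzOnWith.of_dist_le_mul fun s hs t ht => ?_
  have := four_mul_abs_sub_le_abs_F_sub (Real.sqrt_nonneg (finv t)) (Real.sqrt_nonneg (finv s))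
  rw [F_sqrt_finv h hs, F_sqrt_finv h ht] at this
  rw [Real.dist_eq, Real.dist_eq]
  push_cast
  linarith

lemma finv_pos (h : RightInvOn finv f (Ici 0)) {t : ℝ} (ht : 0 < t) : 0 < finv t := by
  by_contra! hle
  have := F_sqrt_finv h ht.le
  rw [Real.sqrt_eq_zero_of_nonpos hle, F_zero] at this
  exact ht.ne this

lemma finv_isLittleO (h : RightInvOn finv f (Ici 0)) : finv =o[𝓝[>] 0] id := by
  refine IsBigO.trans_isLittleO (g := fun t => t ^ 2) ?_
    ((isLittleO_pow_id one_lt_two).mono nhdsWithin_le_nhds)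
  refine IsBigO.of_bound 1 (eventually_nhdsWithin_of_forall fun t (ht : 0 < t) => ?_)
  have hsqrt := sqrt_finv_le h ht.le
  rw [Real.norm_of_nonneg (finv_pos h ht).le, Real.norm_of_nonneg (by positivity),
    ← Real.sq_sqrt (finv_pos h ht).le]
  nlinarith [Real.sqrt_nonneg (finv t)]

lemma hasDerivAt_sqrt_finv (h : RightInvOn finv f (Ici 0)) {t : ℝ} (ht : 0 < t) :
    HasDerivAt (fun t => √(finv t)) (2 * √(1 + √(finv t)) + 2)⁻¹ t :=
  HasDerivAt.of_local_left_inverse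
    ((lipschitzOnWith_sqrt_finv h).continuousOn.continuousAt (Ici_mem_nhds ht))
    (hasDerivAt_F _) (by positivity)
    (eventually_ge_nhds ht |>.mono fun _ hs => F_sqrt_finv h hs)

lemma hasDerivAt_finv (h : RightInvOn finv f (Ici 0)) {t : ℝ} (ht : 0 < t) :
    HasDerivAt finv (√(1 + √(finv t)) - 1) t := by
  have hsq : (fun s => √(finv s) ^ 2) =ᶠ[𝓝 t] finv :=
    (eventually_gt_nhds ht).mono fun s hs => Real.sq_sqrt (finv_pos h hs).le
  refine ((hasDerivAt_sqrt_finv h ht).pow 2).congr_of_eventuallyEq hsq.symm |>.congr_deriv ?_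
  have hp : √(1 + √(finv t)) ^ 2 = 1 + √(finv t) := Real.sq_sqrt (by positivity)
  field_simp
  norm_num
  linear_combination -2 * hp

lemma sqrt_finv_zero (h : RightInvOn finv f (Ici 0)) : √(finv 0) = 0 :=
  le_antisymm (by simpa using sqrt_finv_le h le_rfl) (Real.sqrt_nonneg _)

lemma hasDerivAt_gamma_finv (h : RightInvOn finv f (Ici 0)) (u s : ℝ) :
    HasDerivAt (gamma finv u) (√(1 + √(finv (max (s - u) 0))), 1) s := by
  rcases le_or_gt s u with hs | hs
  · rw [max_eq_right (by linarith), sqrt_finv_zero h, add_zero, Real.sqrt_one]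
    exact hasDerivAt_gamma_of_le (finv_isLittleO h) hs
  · rw [max_eq_left (by linarith)]
    convert hasDerivAt_gamma_of_gt hs (hasDerivAt_finv h (sub_pos.2 hs)) using 2
    ring

lemma lipschitzWith_deriv_gamma_finv (h : RightInvOn finv f (Ici 0)) (u : ℝ) :
    LipschitzWith (1 / 8) (deriv (gamma finv u)) := by
  have hD : deriv (gamma finv u) = fun s => (√(1 + √(finv (max (s - u) 0))), 1) :=
    funext fun s => (hasDerivAt_gamma_finv h u s).deriv
  have hH : LipschitzOnWith (1 / 2 * (1 / 4)) (fun x => √(1 + √(finv x))) (Ici 0) :=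
    lipschitzOnWith_sqrt_one_add.comp (lipschitzOnWith_sqrt_finv h)
      fun x _ => Real.sqrt_nonneg (finv x)
  have hmax : LipschitzWith 1 (fun s => max (s - u) 0) :=
    (isometry_add_right (-u)).lipschitz.max_const 0
  have hcomp := lipschitzOnWith_univ.1
    (hH.comp hmax.lipschitzOnWith fun _ _ => le_max_right (_ - u) 0)
  rw [hD]
  exact (hcomp.prodMk (LipschitzWith.const (1 : ℝ))).weaken (by norm_num)

end RightInverse

theorem gamma_u_C11_general (finv : ℝ → ℝ)
    (h_right : ∀ s ∈ Set.Ici (0 : ℝ), f (finv s) = s) :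
    ∀ u : ℝ, 0 < u →
      (HasDerivWithinAt
        (fun s : ℝ => ((if s ≤ u then s else s + finv (s - u), s) : ℝ × ℝ))
        ((1 : ℝ), (1 : ℝ)) (Set.Iic u) u) ∧
      (HasDerivWithinAt
        (fun s : ℝ => ((if s ≤ u then s else s + finv (s - u), s) : ℝ × ℝ))
        ((1 : ℝ), (1 : ℝ)) (Set.Ici u) u) ∧
      (∃ ε > (0 : ℝ), ∃ K : NNReal,
        LipschitzOnWith K
          (deriv (fun s : ℝ =>
            ((if s ≤ u then s else s + finv (s - u), s) : ℝ × ℝ)))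
          (Set.Ioo (u - ε) (u + ε))) := fun u _ =>
  ⟨hasDerivWithinAt_gamma_Iic finv u, hasDerivWithinAt_gamma_Ici (finv_isLittleO h_right),
    1, one_pos, 1 / 8, (lipschitzWith_deriv_gamma_finv h_right u).lipschitzOnWith⟩

/-- the curves γ_u are C^{1,1}: at s = u the left and right
derivatives agree and equal (1,1), and the derivative is Lipschitz near u. -/
theorem gamma_u_C11 (finv : ℝ → ℝ)
    (h_nonneg : ∀ s ∈ Set.Ici (0 : ℝ), finv s ∈ Set.Ici (0 : ℝ))
    (h_left : ∀ t ∈ Set.Ici (0 : ℝ), finv (f t) = t)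
    (h_right : ∀ s ∈ Set.Ici (0 : ℝ), f (finv s) = s) :
    ∀ u : ℝ, 0 < u →
      (HasDerivWithinAt
        (fun s : ℝ => ((if s ≤ u then s else s + finv (s - u), s) : ℝ × ℝ))
        ((1 : ℝ), (1 : ℝ)) (Set.Iic u) u) ∧
      (HasDerivWithinAt
        (fun s : ℝ => ((if s ≤ u then s else s + finv (s - u), s) : ℝ × ℝ))
        ((1 : ℝ), (1 : ℝ)) (Set.Ici u) u) ∧
      (∃ ε > (0 : ℝ), ∃ K : NNReal,
        LipschitzOnWith K
          (deriv (fun s : ℝ =>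
            ((if s ≤ u then s else s + finv (s - u), s) : ℝ × ℝ)))
          (Set.Ioo (u - ε) (u + ε))) :=
  gamma_u_C11_general finv h_right
end

section
/- Every point of the open set A = {(t,x) ∈ ℝ² : x > 0 and 0 < t − x < f⁻¹(x)} lies in the causal future J⁺(0) of the origin with respect to g = −dt² + (1 + sqrt((t−|x|)₊))dx². -/
noncomputable def rho (t x : ℝ) : ℝ := 1 + Real.sqrt (max (t - |x|) 0)

/-!
The conformal factor `rho` equals `1` on and outside the light cone `t = |x|`, so the
diagonal `t = x` is a null curve of `g`. A point `(t, x)` with `0 < x < t` is therefore reached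
from the origin by running along the diagonal up to `(x, x)` and then straight up the timelike
line `x = const`, i.e. by the Lipschitz curve `s ↦ (s, min s x)`, `s ∈ [0, t]`.
-/

open MeasureTheory

lemma rho_eq_one_of_le_abs {t x : ℝ} (h : t ≤ |x|) : rho t x = 1 := by
  simp [rho, h]

lemma lipschitzWith_one_prodMk_min (a : ℝ) : LipschitzWith 1 (fun s : ℝ => (s, min s a)) := by
  simpa using LipschitzWith.id.prodMk (LipschitzWith.id.min (LipschitzWith.const a))

lemma deriv_min_const_of_lt {s a : ℝ} (h : s < a) : deriv (fun s => min s a) s = 1 := by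
  have hev : (fun s => min s a) =ᶠ[nhds s] id :=
    Filter.mem_of_superset (Iio_mem_nhds h) fun _ hy => min_eq_left (le_of_lt hy)
  simp [hev.deriv_eq]

lemma deriv_min_const_of_gt {s a : ℝ} (h : a < s) : deriv (fun s => min s a) s = 0 := by
  have hev : (fun s => min s a) =ᶠ[nhds s] fun _ => a :=
    Filter.mem_of_superset (Ioi_mem_nhds h) fun _ hy => min_eq_right (le_of_lt hy)
  simp [hev.deriv_eq]

lemma causal_at_prodMk_min {s a : ℝ} (hs : 0 ≤ s) (hne : s ≠ a) :
    -(deriv (fun s : ℝ => s) s) ^ 2 + rho s (min s a) * (deriv (fun s => min s a) s) ^ 2 ≤ 0 := by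
  rcases hne.lt_or_gt with hlt | hgt
  · have hrho : rho s (min s a) = 1 :=
      rho_eq_one_of_le_abs (by rw [min_eq_left hlt.le, abs_of_nonneg hs])
    simp [deriv_min_const_of_lt hlt, hrho]
  · simp [deriv_min_const_of_gt hgt]

theorem A_subset_causal_future_general (finv : ℝ → ℝ) :
    ∀ p : ℝ × ℝ, 0 < p.2 → 0 < p.1 - p.2 → p.1 - p.2 < finv p.2 →
      ∃ (T : ℝ) (γ : ℝ → ℝ × ℝ) (K : NNReal), 0 < T ∧
        LipschitzOnWith K γ (Set.Icc 0 T) ∧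
        γ 0 = (0, 0) ∧ γ T = p ∧
        MonotoneOn (fun s => (γ s).1) (Set.Icc 0 T) ∧
        (∀ᵐ s ∂(MeasureTheory.volume.restrict (Set.Icc (0 : ℝ) T)),
          -(deriv (fun s => (γ s).1) s) ^ 2 +
            rho (γ s).1 (γ s).2 * (deriv (fun s => (γ s).2) s) ^ 2 ≤ 0) := by
  rintro ⟨t, x⟩ hx ht -
  dsimp only at hx ht ⊢
  refine ⟨t, fun s => (s, min s x), 1, by linarith,
    (lipschitzWith_one_prodMk_min x).lipschitzOnWith, by simp [hx.le],
    by simp [show x ≤ t by linarith], fun _ _ _ _ h => h, ?_⟩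
  filter_upwards [ae_restrict_mem measurableSet_Icc, Measure.ae_ne _ x] with s hs hne
  exact causal_at_prodMk_min hs.1 hne

/-- every point of A = {(t,x) : x > 0, 0 < t − x < f⁻¹(x)} lies
in the causal future J⁺(0) of the origin: it is reachable from (0,0) by a
future-directed Lipschitz causal curve. -/
theorem A_subset_causal_future (finv : ℝ → ℝ)
    (h_nonneg : ∀ s ∈ Set.Ici (0 : ℝ), finv s ∈ Set.Ici (0 : ℝ))
    (h_left : ∀ t ∈ Set.Ici (0 : ℝ), finv (f t) = t)
    (h_right : ∀ s ∈ Set.Ici (0 : ℝ), f (finv s) = s) :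
    ∀ p : ℝ × ℝ, 0 < p.2 → 0 < p.1 - p.2 → p.1 - p.2 < finv p.2 →
      ∃ (T : ℝ) (γ : ℝ → ℝ × ℝ) (K : NNReal), 0 < T ∧
        LipschitzOnWith K γ (Set.Icc 0 T) ∧
        γ 0 = (0, 0) ∧ γ T = p ∧
        MonotoneOn (fun s => (γ s).1) (Set.Icc 0 T) ∧
        (∀ᵐ s ∂(MeasureTheory.volume.restrict (Set.Icc (0 : ℝ) T)),
          -(deriv (fun s => (γ s).1) s) ^ 2 +
            rho (γ s).1 (γ s).2 * (deriv (fun s => (γ s).2) s) ^ 2 ≤ 0) :=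
  A_subset_causal_future_general finv
end

section
/- In the region t > |x| > 0, the metric g = −dt² + (1 + sqrt(t − |x|))dx² satisfies Ric(v,v) ≥ 0 for every causal vector v; i.e., since Ric = (R/2)g in dimension 2 and the scalar curvature R is negative, Ric(v,v) = (R/2)g(v,v) ≥ 0 whenever g(v,v) ≤ 0. -/
/-- The scalar curvature of `-dt² + ρ dx²` at a point, written in terms of the value of `ρ`
there, for `ρ = 1 + √(t - |x|)`. -/
noncomputable def scalarCurvature (ρ : ℝ) : ℝ :=
  -(ρ + (ρ - 1) ^ 2) / (4 * ρ ^ 2 * (ρ - 1) ^ 3)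

lemma scalarCurvature_neg {ρ : ℝ} (hρ : 1 < ρ) : scalarCurvature ρ < 0 := by
  have hρ₁ : 0 < ρ - 1 := sub_pos.2 hρ
  exact div_neg_of_neg_of_pos (by nlinarith) (by positivity)

lemma one_lt_one_add_sqrt {a : ℝ} (ha : 0 < a) : 1 < 1 + Real.sqrt a :=
  lt_add_of_pos_right 1 (Real.sqrt_pos.2 ha)

theorem strong_energy_condition_general (t x : ℝ) (ht : |x| < t) :
    (-((1 + Real.sqrt (t - |x|)) + ((1 + Real.sqrt (t - |x|)) - 1) ^ 2) /
        (4 * (1 + Real.sqrt (t - |x|)) ^ 2 *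
          ((1 + Real.sqrt (t - |x|)) - 1) ^ 3) < 0) ∧
    ∀ v : ℝ × ℝ,
      -v.1 ^ 2 + (1 + Real.sqrt (t - |x|)) * v.2 ^ 2 ≤ 0 →
      (-((1 + Real.sqrt (t - |x|)) + ((1 + Real.sqrt (t - |x|)) - 1) ^ 2) /
          (4 * (1 + Real.sqrt (t - |x|)) ^ 2 *
            ((1 + Real.sqrt (t - |x|)) - 1) ^ 3)) / 2 *
        (-v.1 ^ 2 + (1 + Real.sqrt (t - |x|)) * v.2 ^ 2) ≥ 0 := by
  have hR : scalarCurvature (1 + Real.sqrt (t - |x|)) < 0 :=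
    scalarCurvature_neg (one_lt_one_add_sqrt (sub_pos.2 ht))
  refine ⟨hR, fun v hcausal => ?_⟩
  exact mul_nonneg_of_nonpos_of_nonpos (div_nonpos_of_nonpos_of_nonneg hR.le zero_le_two) hcausal

/-- in t > |x| > 0 the metric g = −dt² + ρ dx²,
ρ = 1 + √(t − |x|), satisfies Ric(v,v) = (R/2)·g(v,v) ≥ 0 for every causal
vector v, where R = −(ρ + (ρ−1)²)/(4ρ²(ρ−1)³) < 0. -/
theorem strong_energy_condition (t x : ℝ) (hx : x ≠ 0) (ht : |x| < t) :
    (-((1 + Real.sqrt (t - |x|)) + ((1 + Real.sqrt (t - |x|)) - 1) ^ 2) /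
        (4 * (1 + Real.sqrt (t - |x|)) ^ 2 *
          ((1 + Real.sqrt (t - |x|)) - 1) ^ 3) < 0) ∧
    ∀ v : ℝ × ℝ,
      -v.1 ^ 2 + (1 + Real.sqrt (t - |x|)) * v.2 ^ 2 ≤ 0 →
      (-((1 + Real.sqrt (t - |x|)) + ((1 + Real.sqrt (t - |x|)) - 1) ^ 2) /
          (4 * (1 + Real.sqrt (t - |x|)) ^ 2 *
            ((1 + Real.sqrt (t - |x|)) - 1) ^ 3)) / 2 *
        (-v.1 ^ 2 + (1 + Real.sqrt (t - |x|)) * v.2 ^ 2) ≥ 0 :=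
  strong_energy_condition_general t x ht
end
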